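/- Define f̃ : ℂ → ℂ by f̃(z) = f(z) for Im z ≥ 0, f̃(z) = 2z - δ(Im z)exp(-z²) for -1 ≤ Im z < 0, and f̃(z) = 2z + δ·exp(-z²) for Im z < -1. Then f̃ is continuous on ℂ, and along the negative imaginary axis |f̃(-ir)| / exp(r²) → δ as r → +∞; in particular f̃ is unbounded faster than any polynomial, so f̃ is not of polynomial type. -/

import Mathlib

open Set Complex Filter

/-- The slice function `h_y`. -/
noncomputable def hy (y x : ℝ) : ℝ :=
  if |x| + |y - 3/4| < 1/4 then 1
  else if y ≤ |x| then 4
  else if y ≤ 3/4 then 6 * |x| - 6 * y + 4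
  else (3 * |x| + 5 * y - 4) / (2 * y - 1)

/-- The map `h(x + iy) = h_y(x)·x + iy`. -/
noncomputable def hmap (z : ℂ) : ℂ := ⟨hy z.im z.re * z.re, z.im⟩

/-- For `y > 0`, the unique integer `m` with `2^{-(m+1)} < y ≤ 2^{-m}`. -/
noncomputable def mval (y : ℝ) : ℤ := ⌊Real.logb 2 y⁻¹⌋

/-- The map `f`: equal to `2^{-(m+1)} h(2^m z)` when `Im z ∈ (2^{-(m+1)}, 2^{-m}]`,
and to `2x + iy/2` when `Im z ≤ 0`. -/
noncomputable def f (z : ℂ) : ℂ :=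
  if z.im ≤ 0 then ⟨2 * z.re, z.im / 2⟩
  else (2 : ℂ) ^ (-(mval z.im + 1)) * hmap ((2 : ℂ) ^ (mval z.im) * z)

/-- The `transcendental' quasiregular map `f̃`. -/
noncomputable def ftilde (δ : ℝ) (z : ℂ) : ℂ :=
  if 0 ≤ z.im then f z
  else if -1 ≤ z.im then 2 * z - δ * (z.im : ℂ) * Complex.exp (-z ^ 2)
  else 2 * z + δ * Complex.exp (-z ^ 2)

/-!
On the strip `2^{-(m+1)} < Im z ≤ 2^{-m}` the map `f` is `fStrip m`, i.e.
`x + iy ↦ h_Y(X)·x/2 + iy/2` with `X + iY = 2^m (x + iy)`, which is continuous because `h` is;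
two adjacent strips agree on their common line since `h_1(x) = h_{1/2}(x/2)`. Near the real axis
`f` differs from the linear map `fLin z = 2x + iy/2` only where `|x| < 2y`, and there by at most
`8y`, which gives continuity on `Im z ≤ 0`. The three pieces of `f̃` agree on `Im z = 0` and
`Im z = -1`, and `f̃(-ir) = (δ - 2r e^{-r²} i) e^{r²}` for `r > 1`, which yields both limits.
-/
open Topology

lemma continuous_complex_mk {X : Type*} [TopologicalSpace X] {u v : X → ℝ}
    (hu : Continuous u) (hv : Continuous v) : Continuous fun x => (⟨u x, v x⟩ : ℂ) :=
  Complex.equivRealProdCLM.symm.continuous.comp (hu.prodMk hv)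

lemma continuous_hy : Continuous fun p : ℝ × ℝ => hy p.1 p.2 := by
  have hupper : Continuous fun p : ℝ × ℝ => if p.1 ≤ 3/4 then 6 * |p.2| - 6 * p.1 + 4
      else (3 * |p.2| + 5 * p.1 - 4) / (2 * p.1 - 1) := by
    refine continuous_if_le continuous_fst continuous_const
      (by fun_prop : Continuous _).continuousOn
      ((by fun_prop : Continuous _).continuousOn.div (by fun_prop) fun p (hp : 3/4 ≤ p.1) => by
        linarith) ?_
    rintro ⟨y, x⟩ (rfl : y = 3/4)
    norm_num; ring
  have hlower : Continuous fun p : ℝ × ℝ => if p.1 ≤ |p.2| then 4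
      else if p.1 ≤ 3/4 then 6 * |p.2| - 6 * p.1 + 4
      else (3 * |p.2| + 5 * p.1 - 4) / (2 * p.1 - 1) := by
    refine continuous_const.if_le hupper continuous_fst (by fun_prop) ?_
    rintro ⟨y, x⟩ (h : y = |x|)
    dsimp only
    split_ifs
    · rw [h]; ring
    · rw [h, eq_div_iff (by linarith)]; ring
  refine Continuous.if (fun p hp => ?_) continuous_const hlower
  obtain ⟨y, x⟩ := p
  have hdiamond : |x| + |y - 3/4| = 1/4 :=
    frontier_lt_subset_eq (f := fun p : ℝ × ℝ => |p.2| + |p.1 - 3/4|) (g := fun _ => 1/4)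
      (by fun_prop) continuous_const hp
  have hx : |x| ≤ 1/4 := by linarith [abs_nonneg (y - 3/4)]
  have hy_ge : 1/2 ≤ y := by linarith [neg_abs_le (y - 3/4), abs_nonneg x]
  dsimp only
  rw [if_neg (by linarith)]
  split_ifs with h
  · rw [abs_of_nonpos (a := y - 3/4) (by linarith)] at hdiamond; linarith
  · rw [abs_of_nonneg (a := y - 3/4) (by linarith)] at hdiamond
    rw [eq_div_iff (by linarith)]; linarith

lemma abs_hy_le (y x : ℝ) : |hy y x| ≤ 4 := by
  unfold hy
  have hx := abs_nonneg x
  split_ifs with h₁ h₂ h₃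
  · norm_num
  · norm_num
  · rw [abs_le]; constructor <;> linarith
  · have hd : 0 < 2 * y - 1 := by linarith
    rw [abs_le, div_le_iff₀ hd, le_div_iff₀ hd]
    constructor <;> linarith

lemma hy_eq_four {y x : ℝ} (hy₀ : 1/4 ≤ y) (hyx : y ≤ |x|) : hy y x = 4 := by
  unfold hy
  rw [if_neg (by linarith [abs_nonneg (y - 3/4)]), if_pos hyx]

lemma hy_one (x : ℝ) : hy 1 x = hy (1/2) (x/2) := by
  unfold hy
  have hx := abs_nonneg x
  rw [abs_div, abs_two]
  norm_num
  rw [if_neg (not_lt.mpr hx), if_neg (by linarith : ¬ |x| / 2 < 0)]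
  split_ifs <;> first | rfl | (exfalso; linarith) | ring

lemma mval_eq_iff {y : ℝ} (hpos : 0 < y) {m : ℤ} :
    mval y = m ↔ 1/2 < 2 ^ m * y ∧ 2 ^ m * y ≤ 1 := by
  unfold mval
  rw [Int.floor_eq_iff, Real.le_logb_iff_rpow_le one_lt_two (inv_pos.2 hpos),
    Real.logb_lt_iff_lt_rpow one_lt_two (inv_pos.2 hpos), Real.rpow_add_one two_ne_zero,
    Real.rpow_intCast, inv_eq_one_div, le_div_iff₀ hpos, div_lt_iff₀ hpos]
  constructor <;> rintro ⟨h₁, h₂⟩ <;> constructor <;> linarith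

noncomputable def fStrip (m : ℤ) (z : ℂ) : ℂ :=
  ⟨hy (2 ^ m * z.im) (2 ^ m * z.re) * z.re / 2, z.im / 2⟩

noncomputable def fLin (z : ℂ) : ℂ := ⟨2 * z.re, z.im / 2⟩

lemma continuous_fStrip (m : ℤ) : Continuous (fStrip m) :=
  have hscaled : Continuous fun z : ℂ => ((2:ℝ) ^ m * z.im, (2:ℝ) ^ m * z.re) := by fun_prop
  continuous_complex_mk (((continuous_hy.comp hscaled).mul (by fun_prop)).div_const 2)
    (by fun_prop)

lemma continuous_fLin : Continuous fLin :=
  continuous_complex_mk (by fun_prop) (by fun_prop)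

lemma f_of_im_nonpos {z : ℂ} (h : z.im ≤ 0) : f z = fLin z := if_pos h

lemma f_of_im_pos {z : ℂ} (h : 0 < z.im) : f z = fStrip (mval z.im) z := by
  have hcast (k : ℤ) : (2:ℂ) ^ k = ((2 ^ k : ℝ) : ℂ) := by push_cast; rfl
  set m := mval z.im
  have hhalf : (2:ℝ) ^ (-(m + 1)) * 2 ^ m = 1 / 2 := by
    rw [zpow_neg, zpow_add_one₀ two_ne_zero]; field_simp
  unfold f
  rw [if_neg h.not_ge, hcast, hcast]
  apply Complex.ext <;> simp only [fStrip, hmap, Complex.re_ofReal_mul, Complex.im_ofReal_mul]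
  · linear_combination hy (2 ^ m * z.im) (2 ^ m * z.re) * z.re * hhalf
  · linear_combination z.im * hhalf

lemma fStrip_eq_fStrip_sub_one {m : ℤ} {z : ℂ} (h : 2 ^ m * z.im = 1) :
    fStrip m z = fStrip (m - 1) z := by
  have h2 : (2:ℝ) ^ (m - 1) = 2 ^ m / 2 := zpow_sub_one₀ two_ne_zero m
  simp only [fStrip, h, h2, div_mul_eq_mul_div, hy_one]

lemma norm_f_sub_fLin_le (z : ℂ) : ‖f z - fLin z‖ ≤ 8 * max z.im 0 := by
  rcases le_or_gt z.im 0 with h | h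
  · rw [f_of_im_nonpos h, sub_self, norm_zero]; positivity
  rw [f_of_im_pos h, max_eq_left h.le]
  set m := mval z.im
  have hm : 1/2 < 2 ^ m * z.im := ((mval_eq_iff h).1 rfl).1
  have h2m : (0:ℝ) < 2 ^ m := by positivity
  set t := hy (2 ^ m * z.im) (2 ^ m * z.re)
  have hdiff : fStrip m z - fLin z = (((t / 2 - 2) * z.re : ℝ) : ℂ) := by
    apply Complex.ext <;> simp only [fStrip, fLin, Complex.sub_re, Complex.sub_im,
      Complex.ofReal_re, Complex.ofReal_im] <;> ring
  rw [hdiff, Complex.norm_real, Real.norm_eq_abs, abs_mul]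
  by_cases hx : 2 * z.im ≤ |z.re|
  · have ht : t = 4 := hy_eq_four (by linarith) (by
      rw [abs_mul, abs_of_pos h2m]; nlinarith)
    rw [ht]; norm_num; positivity
  · have ht : |t / 2 - 2| ≤ 4 := by
      have := abs_le.1 (abs_hy_le (2 ^ m * z.im) (2 ^ m * z.re))
      rw [abs_le]; constructor <;> linarith
    nlinarith [abs_nonneg (t / 2 - 2), abs_nonneg z.re]

lemma continuousAt_f_of_im_nonpos {z₀ : ℂ} (h : z₀.im ≤ 0) : ContinuousAt f z₀ := by
  have hsmall : Tendsto (fun z => f z - fLin z) (𝓝 z₀) (𝓝 0) := by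
    refine squeeze_zero_norm norm_f_sub_fLin_le ?_
    simpa [max_eq_right h] using (by fun_prop : Continuous fun z : ℂ => 8 * max z.im 0).tendsto z₀
  simpa [ContinuousAt, f_of_im_nonpos h] using (continuous_fLin.tendsto z₀).add hsmall

lemma continuousAt_f_of_im_pos {z₀ : ℂ} (h : 0 < z₀.im) : ContinuousAt f z₀ := by
  set m := mval z₀.im
  have hm := (mval_eq_iff h).1 rfl
  have h2m : (0:ℝ) < 2 ^ m := by positivity
  have hg : Continuous fun z : ℂ => if 2 ^ m * z.im ≤ 1 then fStrip m z else fStrip (m - 1) z :=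
    (continuous_fStrip m).if_le (continuous_fStrip (m - 1)) (by fun_prop) continuous_const
      fun z hz => fStrip_eq_fStrip_sub_one hz
  have hU : IsOpen {z : ℂ | 2 ^ m * z.im ∈ Ioo (1/2) 2} := isOpen_Ioo.preimage (by fun_prop)
  refine hg.continuousAt.congr (Filter.eventuallyEq_of_mem (hU.mem_nhds ⟨hm.1, by linarith⟩) ?_)
  rintro z ⟨hz₁, hz₂⟩
  have hz : 0 < z.im := pos_of_mul_pos_right (by linarith) h2m.le
  dsimp only
  rw [f_of_im_pos hz]
  split_ifs with hle
  · rw [(mval_eq_iff hz).2 ⟨hz₁, hle⟩]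
  · have h2 : (2:ℝ) ^ (m - 1) = 2 ^ m / 2 := zpow_sub_one₀ two_ne_zero m
    rw [(mval_eq_iff hz).2 ⟨by rw [h2]; linarith, by rw [h2]; linarith⟩]

lemma continuous_f : Continuous f :=
  continuous_iff_continuousAt.2 fun z =>
    (le_or_gt z.im 0).elim continuousAt_f_of_im_nonpos continuousAt_f_of_im_pos

lemma continuous_ftilde (δ : ℝ) : Continuous (ftilde δ) := by
  refine continuous_f.if_le ?_ continuous_const Complex.continuous_im fun z hz => ?_
  · refine Continuous.if_le (by fun_prop) (by fun_prop) continuous_const Complex.continuous_im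
      fun z hz => ?_
    rw [← hz]; push_cast; ring
  · have hz' : z.im = 0 := hz.symm
    have hfz : f z = 2 * z := by
      rw [f_of_im_nonpos hz'.le]
      apply Complex.ext <;> simp [fLin, hz']
    rw [hfz, if_pos (by rw [hz']; norm_num), hz']
    simp

lemma ftilde_neg_mul_I {δ r : ℝ} (hr : 1 < r) :
    ftilde δ (-(r:ℂ) * I) =
      ((δ:ℂ) - ((2 * r * Real.exp (-r ^ 2) : ℝ) : ℂ) * I) * (Real.exp (r ^ 2) : ℂ) := by
  have him : (-(r:ℂ) * I).im = -r := by simp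
  have hsq : -(-(r:ℂ) * I) ^ 2 = ((r ^ 2 : ℝ) : ℂ) := by
    push_cast; rw [mul_pow, I_sq]; ring
  have hexp : Complex.exp (-(r:ℂ) ^ 2) * Complex.exp ((r:ℂ) ^ 2) = 1 := by
    rw [← Complex.exp_add, neg_add_cancel, Complex.exp_zero]
  unfold ftilde
  rw [if_neg (by rw [him]; linarith), if_neg (by rw [him]; linarith), hsq]
  push_cast
  linear_combination 2 * (r:ℂ) * I * hexp

lemma tendsto_mul_exp_neg_sq : Tendsto (fun r : ℝ => r * Real.exp (-r ^ 2)) atTop (𝓝 0) := by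
  refine squeeze_zero' (eventually_ge_atTop 0 |>.mono fun r hr => by positivity)
    (eventually_ge_atTop 1 |>.mono fun r hr => ?_)
    (by simpa using Real.tendsto_pow_mul_exp_neg_atTop_nhds_zero 1)
  gcongr
  nlinarith

lemma tendsto_norm_ftilde_neg_mul_I_div_exp {δ : ℝ} (hδ : 0 ≤ δ) :
    Tendsto (fun r : ℝ => ‖ftilde δ (-(r : ℂ) * I)‖ / Real.exp (r ^ 2)) atTop (𝓝 δ) := by
  have h0 : Tendsto (fun r : ℝ => 2 * r * Real.exp (-r ^ 2)) atTop (𝓝 0) := by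
    simpa [mul_assoc] using tendsto_mul_exp_neg_sq.const_mul 2
  have hlim := (tendsto_const_nhds (x := (δ:ℂ))).sub
    (((continuous_ofReal.tendsto 0).comp h0).mul_const I)
  rw [Function.comp_def, ofReal_zero, zero_mul, sub_zero] at hlim
  have hnorm := hlim.norm
  rw [norm_real, Real.norm_of_nonneg hδ] at hnorm
  refine hnorm.congr' ?_
  filter_upwards [eventually_gt_atTop 1] with r hr
  rw [ftilde_neg_mul_I hr, norm_mul, Complex.norm_of_nonneg (Real.exp_pos _).le,
    mul_div_cancel_right₀ _ (Real.exp_pos _).ne']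

lemma tendsto_exp_sq_div_pow_atTop (n : ℕ) :
    Tendsto (fun r : ℝ => Real.exp (r ^ 2) / r ^ n) atTop atTop := by
  refine tendsto_atTop_mono' atTop ?_ (Real.tendsto_exp_div_pow_atTop n)
  filter_upwards [eventually_ge_atTop 1] with r hr
  have : r ≤ r ^ 2 := by nlinarith
  gcongr

theorem stmt19 (δ : ℝ) (hδ : 0 < δ) :
    Continuous (ftilde δ) ∧
    Tendsto (fun r : ℝ => ‖ftilde δ (-(r : ℂ) * Complex.I)‖ / Real.exp (r ^ 2))
      atTop (nhds δ) ∧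
    ∀ n : ℕ, Tendsto
      (fun r : ℝ => ‖ftilde δ (-(r : ℂ) * Complex.I)‖ / r ^ n)
      atTop atTop := by
  have hratio := tendsto_norm_ftilde_neg_mul_I_div_exp hδ.le
  refine ⟨continuous_ftilde δ, hratio, fun n => ?_⟩
  refine (hratio.pos_mul_atTop hδ (tendsto_exp_sq_div_pow_atTop n)).congr' ?_
  filter_upwards with r
  rw [mul_div, div_mul_cancel₀ _ (Real.exp_pos _).ne']
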